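/- The function p ↦ σ²(4μ² + 2pσ² − p + 1)/(n p (1−p)) on (0,1) attains its minimum at p* = √(4μ²+1)/(√(4μ²+2σ²) + √(4μ²+1)). -/

import Mathlib

open Real Set

/-!
With `a = √(4μ² + 1)` and `b = √(4μ² + 2σ²)` the numerator is `σ² (a² (1 - p) + b² p)`, so by
partial fractions the risk is `σ²/n · (a²/p + b²/(1 - p))`. By Cauchy–Schwarz
`(a²/p + b²/(1 - p)) (p + (1 - p)) ≥ (a + b)²`, with equality exactly when `p : 1 - p = a : b`,
i.e. at `p = a / (a + b)`.
-/

theorem sq_add_le_sq_div_add_sq_div_one_sub (a b : ℝ) {p : ℝ} (hp : p ∈ Ioo (0 : ℝ) 1) :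
    (a + b) ^ 2 ≤ a ^ 2 / p + b ^ 2 / (1 - p) := by
  obtain ⟨hp0, hp1⟩ := hp
  have hq : 0 < 1 - p := sub_pos.2 hp1
  rw [div_add_div _ _ hp0.ne' hq.ne', le_div_iff₀ (by positivity)]
  nlinarith [sq_nonneg (a * (1 - p) - b * p)]

theorem sq_div_add_sq_div_one_sub_of_eq_div {a b : ℝ} (ha : 0 < a) (hb : 0 < b) :
    a ^ 2 / (a / (a + b)) + b ^ 2 / (1 - a / (a + b)) = (a + b) ^ 2 := by
  have hab : a + b ≠ 0 := by positivity
  rw [one_sub_div hab, add_sub_cancel_left]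
  field_simp

theorem div_add_mem_Ioo {a b : ℝ} (ha : 0 < a) (hb : 0 < b) : a / (a + b) ∈ Ioo (0 : ℝ) 1 :=
  ⟨by positivity, (div_lt_one (by positivity)).2 (lt_add_of_pos_right a hb)⟩

/-- The asymptotic risk p ↦ σ²(4μ² + 2pσ² − p + 1)/(n p (1−p)) on (0,1) attains its
minimum at p* = √(4μ²+1)/(√(4μ²+2σ²) + √(4μ²+1)). -/
theorem streaming_optimal_proportion (μ σ n : ℝ) (hσ : 0 < σ) (hn : 0 < n)
    (f : ℝ → ℝ)
    (hf : ∀ p, f p = σ ^ 2 * (4 * μ ^ 2 + 2 * p * σ ^ 2 - p + 1) / (n * p * (1 - p)))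
    (pstar : ℝ)
    (hpstar : pstar = Real.sqrt (4 * μ ^ 2 + 1) /
      (Real.sqrt (4 * μ ^ 2 + 2 * σ ^ 2) + Real.sqrt (4 * μ ^ 2 + 1))) :
    pstar ∈ Ioo (0 : ℝ) 1 ∧ ∀ p ∈ Ioo (0 : ℝ) 1, f pstar ≤ f p := by
  set a := √(4 * μ ^ 2 + 1)
  set b := √(4 * μ ^ 2 + 2 * σ ^ 2)
  have ha : 0 < a := Real.sqrt_pos.2 (by positivity)
  have hb : 0 < b := Real.sqrt_pos.2 (by positivity)
  have hf' : ∀ p ∈ Ioo (0 : ℝ) 1, f p = σ ^ 2 / n * (a ^ 2 / p + b ^ 2 / (1 - p)) := by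
    rintro p ⟨hp0, hp1⟩
    have hq : 1 - p ≠ 0 := sub_ne_zero.2 hp1.ne'
    rw [hf, sq_sqrt (by positivity), sq_sqrt (by positivity)]
    field_simp
    ring
  have hpstar' : pstar = a / (a + b) := by rw [hpstar, add_comm]
  have hmem : pstar ∈ Ioo (0 : ℝ) 1 := hpstar' ▸ div_add_mem_Ioo ha hb
  refine ⟨hmem, fun p hp => ?_⟩
  rw [hf' p hp, hf' pstar hmem, hpstar', sq_div_add_sq_div_one_sub_of_eq_div ha hb]
  exact mul_le_mul_of_nonneg_left (sq_add_le_sq_div_add_sq_div_one_sub a b hp) (by positivity)
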